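/- Let Σ = VDVᵀ be a p×p positive semidefinite matrix, where V is a p×d real matrix with VᵀV = I_d and D is a d×d diagonal matrix with nonnegative entries. For a subset S of {1,...,p}, let J_S be the p×p diagonal matrix with (J_S)_{ii} = 1 if i ∈ S and 0 otherwise, and let Σ_S = J_S Σ J_S. Then ‖Σ − Σ_S‖_F ≤ 2‖D‖₂ ‖J_S V − V‖_F, where ‖D‖₂ is the spectral norm of D. -/

import Mathlib

open Matrix

/-- Frobenius norm of a real matrix: `‖M‖_F = (tr (M Mᵀ))^{1/2}`. -/
noncomputable def frobNorm {m n : Type*} [Fintype m] [Fintype n]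
    (M : Matrix m n ℝ) : ℝ :=
  Real.sqrt (Matrix.trace (M * Mᵀ))

/-- Spectral norm of a real matrix: the supremum of `‖Av‖₂` over Euclidean unit vectors `v`. -/
noncomputable def specNorm {m n : Type*} [Fintype m] [Fintype n]
    (A : Matrix m n ℝ) : ℝ :=
  sSup ((fun v : n → ℝ => Real.sqrt (∑ i, (A.mulVec v i) ^ 2)) ''
    {v | Real.sqrt (∑ j, (v j) ^ 2) = 1})

/-- The diagonal indicator matrix `J_S` of a subset `S ⊆ {1,...,p}`. -/
def indicatorMatrix {p : ℕ} (S : Finset (Fin p)) : Matrix (Fin p) (Fin p) ℝ :=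
  Matrix.diagonal fun i => if i ∈ S then 1 else 0

/-!
Write `Σ = V D Vᵀ` and `A = J_S V - V`. Then `J_S Σ - Σ = A D Vᵀ` and, by symmetry of `Σ` and
`J_S`, `Σ - Σ J_S = -V D Aᵀ`, so
`Σ - J_S Σ J_S = (Σ - J_S Σ) + J_S (Σ - Σ J_S) = -A D Vᵀ - J_S V D Aᵀ`.
Multiplying by `V` or `Vᵀ` on the appropriate side preserves the Frobenius norm, multiplying by
`J_S` does not increase it, and multiplying by the diagonal `D` scales it by at most
`max |dⱼ| ≤ ‖D‖₂`; hence each of the two terms has Frobenius norm at most `‖D‖₂ ‖A‖_F`.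
-/

attribute [local instance] Matrix.frobeniusNormedAddCommGroup

section FrobeniusNorm

variable {m n k : Type*} [Fintype m] [Fintype n] [Fintype k]

theorem frobNorm_eq_sqrt_sum (M : Matrix m n ℝ) :
    frobNorm M = Real.sqrt (∑ i, ∑ j, M i j ^ 2) := by
  simp [frobNorm, trace, mul_apply, sq]

theorem frobNorm_eq_norm (M : Matrix m n ℝ) : frobNorm M = ‖M‖ := by
  simp [frobNorm_eq_sqrt_sum, frobenius_norm_def, Real.sqrt_eq_rpow]

theorem frobNorm_add_le (M N : Matrix m n ℝ) : frobNorm (M + N) ≤ frobNorm M + frobNorm N := by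
  simpa only [frobNorm_eq_norm] using norm_add_le M N

theorem frobNorm_neg (M : Matrix m n ℝ) : frobNorm (-M) = frobNorm M := by
  simp only [frobNorm_eq_norm, norm_neg]

theorem frobNorm_transpose (M : Matrix m n ℝ) : frobNorm Mᵀ = frobNorm M := by
  simp only [frobNorm_eq_norm, frobenius_norm_transpose]

theorem frobNorm_mul_transpose_of_orthonormal [DecidableEq n] (M : Matrix m n ℝ) {V : Matrix k n ℝ}
    (hV : Vᵀ * V = 1) : frobNorm (M * Vᵀ) = frobNorm M := by
  rw [frobNorm, frobNorm, transpose_mul, transpose_transpose, Matrix.mul_assoc,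
    ← Matrix.mul_assoc Vᵀ, hV, Matrix.one_mul]

theorem frobNorm_mul_of_orthonormal [DecidableEq n] (M : Matrix n m ℝ) {V : Matrix k n ℝ}
    (hV : Vᵀ * V = 1) : frobNorm (V * M) = frobNorm M := by
  rw [← frobNorm_transpose, transpose_mul, frobNorm_mul_transpose_of_orthonormal _ hV,
    frobNorm_transpose]

theorem frobNorm_diagonal_mul_le [DecidableEq m] {d : m → ℝ} {C : ℝ} (hd : ∀ i, |d i| ≤ C)
    (M : Matrix m n ℝ) : frobNorm (diagonal d * M) ≤ C * frobNorm M := by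
  rcases isEmpty_or_nonempty m with hm | ⟨⟨i₀⟩⟩
  · simp [frobNorm_eq_sqrt_sum]
  have hC : 0 ≤ C := (abs_nonneg _).trans (hd i₀)
  rw [frobNorm_eq_sqrt_sum, frobNorm_eq_sqrt_sum, ← Real.sqrt_sq hC,
    ← Real.sqrt_mul (sq_nonneg C), Finset.mul_sum]
  gcongr with i _
  rw [Finset.mul_sum]
  gcongr with j _
  rw [diagonal_mul, mul_pow]
  exact mul_le_mul_of_nonneg_right (sq_le_sq' (neg_le_of_abs_le (hd i)) (le_of_abs_le (hd i))) (sq_nonneg _)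

theorem frobNorm_mul_diagonal_le [DecidableEq n] {d : n → ℝ} {C : ℝ} (hd : ∀ i, |d i| ≤ C)
    (M : Matrix m n ℝ) : frobNorm (M * diagonal d) ≤ C * frobNorm M := by
  rw [← frobNorm_transpose, transpose_mul, diagonal_transpose, ← frobNorm_transpose M]
  exact frobNorm_diagonal_mul_le hd Mᵀ

end FrobeniusNorm

section SpectralNorm

variable {m n : Type*} [Fintype m] [Fintype n]

theorem isCompact_setOf_sqrt_sum_sq_eq_one :
    IsCompact {v : n → ℝ | Real.sqrt (∑ j, v j ^ 2) = 1} := by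
  refine Metric.isCompact_of_isClosed_isBounded (isClosed_eq (by fun_prop) continuous_const) ?_
  refine (Metric.isBounded_closedBall (x := 0) (r := 1)).subset fun v hv => ?_
  rw [mem_closedBall_zero_iff, pi_norm_le_iff_of_nonneg zero_le_one]
  intro j
  rw [Real.norm_eq_abs, ← Real.sqrt_sq_eq_abs, ← Set.mem_ofPred_eq.mp hv]
  exact Real.sqrt_le_sqrt (Finset.single_le_sum (f := fun j => v j ^ 2)
    (fun _ _ => sq_nonneg _) (Finset.mem_univ j))

theorem sqrt_sum_mulVec_sq_le_specNorm (A : Matrix m n ℝ) {v : n → ℝ}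
    (hv : Real.sqrt (∑ j, v j ^ 2) = 1) :
    Real.sqrt (∑ i, (A *ᵥ v) i ^ 2) ≤ specNorm A :=
  le_csSup (isCompact_setOf_sqrt_sum_sq_eq_one.image (by fun_prop)).bddAbove ⟨v, hv, rfl⟩

theorem abs_le_specNorm_diagonal [DecidableEq n] (d : n → ℝ) (j : n) :
    |d j| ≤ specNorm (diagonal d) := by
  have h := sqrt_sum_mulVec_sq_le_specNorm (diagonal d) (v := Pi.single j 1) (by simp [Pi.single_apply])
  simpa [mulVec_single, Pi.single_apply, Real.sqrt_sq_eq_abs] using h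

end SpectralNorm

theorem abs_indicatorMatrix_diag_le_one {p : ℕ} (S : Finset (Fin p)) (i : Fin p) :
    |(if i ∈ S then 1 else 0 : ℝ)| ≤ 1 := by
  split_ifs <;> simp

theorem frobNorm_sub_indicator_conj_le_general (p d : ℕ)
    (V : Matrix (Fin p) (Fin d) ℝ) (hV : Vᵀ * V = 1)
    (dvec : Fin d → ℝ) (S : Finset (Fin p)) :
    frobNorm (V * Matrix.diagonal dvec * Vᵀ -
        indicatorMatrix S * (V * Matrix.diagonal dvec * Vᵀ) * indicatorMatrix S)
      ≤ 2 * specNorm (Matrix.diagonal dvec) * frobNorm (indicatorMatrix S * V - V) := by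
  set J := indicatorMatrix S
  set D := diagonal dvec
  set A := J * V - V
  have hdecomp : V * D * Vᵀ - J * (V * D * Vᵀ) * J = -(A * D * Vᵀ) + J * -(V * (D * Aᵀ)) := by
    have hJ : Jᵀ = J := diagonal_transpose _
    simp only [A, transpose_sub, transpose_mul, hJ, Matrix.mul_sub, Matrix.sub_mul, mul_neg,
      Matrix.mul_assoc]
    abel
  have hD := abs_le_specNorm_diagonal dvec
  calc frobNorm (V * D * Vᵀ - J * (V * D * Vᵀ) * J)
      ≤ frobNorm (A * D * Vᵀ) + frobNorm (J * (V * (D * Aᵀ))) := by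
        rw [hdecomp, mul_neg, ← frobNorm_neg (A * D * Vᵀ), ← frobNorm_neg (J * _)]
        exact frobNorm_add_le _ _
    _ ≤ specNorm D * frobNorm A + specNorm D * frobNorm A := by
        gcongr
        · rw [frobNorm_mul_transpose_of_orthonormal _ hV]
          exact frobNorm_mul_diagonal_le hD A
        · calc frobNorm (J * (V * (D * Aᵀ)))
              ≤ 1 * frobNorm (V * (D * Aᵀ)) :=
                frobNorm_diagonal_mul_le (abs_indicatorMatrix_diag_le_one S) _
            _ = frobNorm (D * Aᵀ) := by rw [one_mul, frobNorm_mul_of_orthonormal _ hV]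
            _ ≤ specNorm D * frobNorm A := by
                rw [← frobNorm_transpose A]
                exact frobNorm_diagonal_mul_le hD Aᵀ
    _ = 2 * specNorm D * frobNorm A := by ring

/-- Let `Σ = VDVᵀ` with `V` a `p×d` matrix with orthonormal columns and
`D` diagonal with nonnegative entries. For `S ⊆ {1,...,p}` and `Σ_S = J_S Σ J_S`,
`‖Σ − Σ_S‖_F ≤ 2‖D‖₂‖J_S V − V‖_F`. -/
theorem frobNorm_sub_indicator_conj_le (p d : ℕ)
    (V : Matrix (Fin p) (Fin d) ℝ) (hV : Vᵀ * V = 1)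
    (dvec : Fin d → ℝ) (hdvec : ∀ i, 0 ≤ dvec i) (S : Finset (Fin p)) :
    frobNorm (V * Matrix.diagonal dvec * Vᵀ -
        indicatorMatrix S * (V * Matrix.diagonal dvec * Vᵀ) * indicatorMatrix S)
      ≤ 2 * specNorm (Matrix.diagonal dvec) * frobNorm (indicatorMatrix S * V - V) :=
  frobNorm_sub_indicator_conj_le_general p d V hV dvec S
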